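/- arXiv:2203.15878 — 4 statements merged into one kernel-verified Lean document; each statement's English description precedes it below -/
import Mathlib

section
/- A finite simple graph G is a convex geometry with respect to the P₃ convexity if and only if G is a forest of stars, i.e., every connected component of G is a star. -/
open SimpleGraph

variable {V : Type*} {W : Type*}

/-- The convex hull of `S`: the smallest convex set containing `S`. -/
def chull (Cvx : Set V → Prop) (S : Set V) : Set V := ⋂₀ {T | S ⊆ T ∧ Cvx T}

/-- The set of extreme vertices of `S`. -/
def extremeSet (Cvx : Set V → Prop) (S : Set V) : Set V := {x | x ∈ S ∧ Cvx (S \ {x})}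

/-- A convexity is a convex geometry if every convex set is the convex hull
of its extreme vertices. -/
def IsConvexGeometry (Cvx : Set V → Prop) : Prop :=
  ∀ S : Set V, Cvx S → S = chull Cvx (extremeSet Cvx S)

/-- Convexity induced by a system of p-walks: `S` is convex iff every vertex
lying on a p-walk between two vertices of `S` belongs to `S`. -/
def PConvex (G : SimpleGraph V) (P : ∀ ⦃u v : V⦄, G.Walk u v → Prop) (S : Set V) : Prop :=
  ∀ ⦃u v : V⦄, u ∈ S → v ∈ S → ∀ w : G.Walk u v, P w → ∀ x ∈ w.support, x ∈ S

/-- `x` and `y` appear consecutively (in either order) in the list `l`. -/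
def consecIn (l : List V) (x y : V) : Prop := [x, y] <:+: l ∨ [y, x] <:+: l

/-- An induced path: a path such that the only edges of `G` between its vertices
are the consecutive ones. -/
def IsInducedPathW (G : SimpleGraph V) {u v : V} (w : G.Walk u v) : Prop :=
  w.IsPath ∧ ∀ x ∈ w.support, ∀ y ∈ w.support, G.Adj x y → consecIn w.support x y

/-- An induced cycle: a cycle such that the only edges of `G` between its vertices
are the consecutive (cyclically) ones. -/
def IsInducedCycleW (G : SimpleGraph V) {u : V} (w : G.Walk u u) : Prop :=
  w.IsCycle ∧ ∀ x ∈ w.support, ∀ y ∈ w.support, G.Adj x y → consecIn w.support x y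

/-- A graph is chordal if it has no induced cycle of length at least 4. -/
def Chordal (G : SimpleGraph V) : Prop :=
  ¬ ∃ (u : V) (w : G.Walk u u), IsInducedCycleW G w ∧ 4 ≤ w.length

/-- The cycle `w` has an odd chord: an edge of `G` joining two vertices of the cycle
whose distance along the cycle is odd and greater than 1. -/
def HasOddChord (G : SimpleGraph V) {u : V} (w : G.Walk u u) : Prop :=
  ∃ i j : ℕ, ∃ hi : i < w.support.length, ∃ hj : j < w.support.length, i < j ∧
    G.Adj (w.support.get ⟨i, hi⟩) (w.support.get ⟨j, hj⟩) ∧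
    Odd (min (j - i) (w.length - (j - i))) ∧ 1 < min (j - i) (w.length - (j - i))

/-- A graph is strongly chordal if it is chordal and every even cycle of length
at least 6 has an odd chord. -/
def StronglyChordal (G : SimpleGraph V) : Prop :=
  Chordal G ∧ ∀ (u : V) (w : G.Walk u u), w.IsCycle → Even w.length → 6 ≤ w.length →
    HasOddChord G w

/-- Closed neighborhood `N[v]`. -/
def closedNbhd (G : SimpleGraph V) (v : V) : Set V := insert v (G.neighborSet v)

/-- A vertex is simple if the closed neighborhoods of its closed neighbors form a
family totally ordered by inclusion. -/
def SimpleVtx (G : SimpleGraph V) (v : V) : Prop :=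
  ∀ u ∈ closedNbhd G v, ∀ w ∈ closedNbhd G v,
    closedNbhd G u ⊆ closedNbhd G w ∨ closedNbhd G w ⊆ closedNbhd G u

/-- A vertex is simplicial if its closed neighborhood is a clique. -/
def SimplicialVtx (G : SimpleGraph V) (v : V) : Prop :=
  G.IsClique (closedNbhd G v)

/-- An even-chorded path: a path with no odd chord and such that no endpoint
lies in a chord. -/
def IsEvenChorded (G : SimpleGraph V) {u v : V} (w : G.Walk u v) : Prop :=
  w.IsPath ∧ ∀ i j : ℕ, ∀ hi : i < w.support.length, ∀ hj : j < w.support.length,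
    i + 1 < j → G.Adj (w.support.get ⟨i, hi⟩) (w.support.get ⟨j, hj⟩) →
      Even (j - i) ∧ 0 < i ∧ j < w.support.length - 1

/-- A tolled walk `u₀u₁…u_k`: `u₀uᵢ ∈ E(G)` implies `i = 1` and `u_ju_k ∈ E(G)`
implies `j = k - 1`. -/
def IsTolledWalk (G : SimpleGraph V) {u v : V} (w : G.Walk u v) : Prop :=
  ∀ i : ℕ, ∀ hi : i < w.support.length,
    (G.Adj u (w.support.get ⟨i, hi⟩) → i = 1) ∧
    (G.Adj (w.support.get ⟨i, hi⟩) v → i = w.support.length - 2)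

/-- A weakly toll walk `u₀u₁…u_k`: `u₀uᵢ ∈ E(G)` implies `uᵢ = u₁` and
`u_ju_k ∈ E(G)` implies `u_j = u_{k-1}`. -/
def IsWeaklyTollWalk (G : SimpleGraph V) {u v : V} (w : G.Walk u v) : Prop :=
  ∀ i : ℕ, ∀ hi : i < w.support.length,
    (G.Adj u (w.support.get ⟨i, hi⟩) → w.support.get ⟨i, hi⟩ = w.support.getD 1 u) ∧
    (G.Adj (w.support.get ⟨i, hi⟩) v → w.support.get ⟨i, hi⟩ = w.support.getD (w.support.length - 2) v)

/-- An interval graph: vertices can be assigned nonempty closed real intervals so that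
distinct vertices are adjacent iff the intervals intersect. -/
def IsIntervalGraph (G : SimpleGraph V) : Prop :=
  ∃ a b : V → ℝ, (∀ v, a v ≤ b v) ∧
    ∀ u v : V, u ≠ v →
      (G.Adj u v ↔ (Set.Icc (a u) (b u) ∩ Set.Icc (a v) (b v)).Nonempty)

/-- A proper interval graph: an interval model in which no interval properly
contains another. -/
def IsProperIntervalGraph (G : SimpleGraph V) : Prop :=
  ∃ a b : V → ℝ, (∀ v, a v ≤ b v) ∧
    (∀ u v : V, u ≠ v →
      (G.Adj u v ↔ (Set.Icc (a u) (b u) ∩ Set.Icc (a v) (b v)).Nonempty)) ∧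
    ∀ u v : V, ¬ (Set.Icc (a u) (b u) ⊂ Set.Icc (a v) (b v))

/-- An end vertex: some interval model in which its interval is an end interval. -/
def IsEndVertex (G : SimpleGraph V) (x : V) : Prop :=
  ∃ a b : V → ℝ, (∀ v, a v ≤ b v) ∧
    (∀ u v : V, u ≠ v →
      (G.Adj u v ↔ (Set.Icc (a u) (b u) ∩ Set.Icc (a v) (b v)).Nonempty)) ∧
    ((∀ v, a x ≤ a v) ∨ (∀ v, b v ≤ b x))

/-- `G` contains an induced subgraph isomorphic to `H`. -/
def HasInducedSubgraphIso (G : SimpleGraph V) (H : SimpleGraph W) : Prop :=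
  ∃ f : W ↪ V, ∀ a b : W, G.Adj (f a) (f b) ↔ H.Adj a b

def gemGraph : SimpleGraph (Fin 5) :=
  SimpleGraph.fromRel fun a b =>
    ((a : ℕ), (b : ℕ)) ∈ [(0,1),(1,2),(2,3),(4,0),(4,1),(4,2),(4,3)]

def houseGraph : SimpleGraph (Fin 5) :=
  SimpleGraph.fromRel fun a b =>
    ((a : ℕ), (b : ℕ)) ∈ [(0,1),(1,2),(2,3),(0,3),(0,4),(1,4)]

def dominoGraph : SimpleGraph (Fin 6) :=
  SimpleGraph.fromRel fun a b =>
    ((a : ℕ), (b : ℕ)) ∈ [(0,1),(1,2),(2,3),(0,3),(2,4),(4,5),(3,5)]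

def aGraph : SimpleGraph (Fin 6) :=
  SimpleGraph.fromRel fun a b =>
    ((a : ℕ), (b : ℕ)) ∈ [(0,1),(1,2),(2,3),(0,3),(2,4),(3,5)]

/-- A triangle path: a path such that any two of its vertices at distance
greater than 2 along the path are non-adjacent in `G`. -/
def IsTrianglePath (G : SimpleGraph V) {u v : V} (w : G.Walk u v) : Prop :=
  w.IsPath ∧ ∀ i j : ℕ, ∀ hi : i < w.support.length, ∀ hj : j < w.support.length,
    i + 2 < j → ¬ G.Adj (w.support.get ⟨i, hi⟩) (w.support.get ⟨j, hj⟩)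

/-- `S` is `H`-free convex. -/
def HFreeConvex [Fintype W] (G : SimpleGraph V) (H : SimpleGraph W) (S : Set V) : Prop :=
  ∀ (S' : Finset V), ↑S' ⊆ S → S'.card = Fintype.card W - 1 →
    ∀ x : V, Nonempty ((G.induce (↑S' ∪ {x} : Set V)) ≃g H) → x ∈ S

/-- `a b c d` is an induced path on four vertices of `G`. -/
def InducedP4 (G : SimpleGraph V) (a b c d : V) : Prop :=
  G.Adj a b ∧ G.Adj b c ∧ G.Adj c d ∧ ¬ G.Adj a c ∧ ¬ G.Adj a d ∧ ¬ G.Adj b d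

/-- Every connected component of `G` is a star. -/
def StarForest (G : SimpleGraph V) : Prop :=
  ∀ v : V, ∃ c : V, G.Reachable v c ∧ (∀ x, G.Reachable c x → x ≠ c → G.Adj c x) ∧
    ∀ x y, G.Adj c x → G.Adj c y → ¬ G.Adj x y

/-- An induced `n`-gem in `G`: `x 0, …, x n` is an induced path and `u` is adjacent
to all of them, the whole forming an induced subgraph of `G`. -/
def IsInducedNGem (G : SimpleGraph V) (n : ℕ) (x : Fin (n + 1) → V) (u : V) : Prop :=
  Function.Injective x ∧ (∀ i, x i ≠ u) ∧
  (∀ i j, G.Adj (x i) (x j) ↔ ((i : ℕ) + 1 = (j : ℕ) ∨ (j : ℕ) + 1 = (i : ℕ))) ∧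
  (∀ i, G.Adj u (x i))

/-- The induced `n`-gem is solved: there is an induced path of length 3 in `G`
connecting `x 0` and `x n` that avoids `u`. -/
def GemSolved (G : SimpleGraph V) (n : ℕ) (x : Fin (n + 1) → V) (u : V) : Prop :=
  ∃ w : G.Walk (x 0) (x (Fin.last n)), IsInducedPathW G w ∧ w.length = 3 ∧ u ∉ w.support

section P3Aux

variable {V : Type*} {G : SimpleGraph V}

/-- The P₃ convexity predicate. -/
abbrev P3Cvx (G : SimpleGraph V) : Set V → Prop :=
  PConvex G (fun _ _ w => w.IsPath ∧ w.length = 2)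

lemma mem_of_two_nbrs {S : Set V} (hS : P3Cvx G S) {x u v : V}
    (hu : u ∈ S) (hv : v ∈ S) (huv : u ≠ v) (hxu : G.Adj x u) (hxv : G.Adj x v) :
    x ∈ S := by
  refine hS hu hv (Walk.cons hxu.symm (Walk.cons hxv Walk.nil)) ⟨?_, by simp⟩ x ?_
  · simp [Walk.isPath_def, hxu.ne', huv, hxv.ne]
  · simp

lemma cvx_of {S : Set V}
    (h : ∀ x u v : V, u ∈ S → v ∈ S → u ≠ v → G.Adj x u → G.Adj x v → x ∈ S) :
    P3Cvx G S := by
  intro u v hu hv w hw x hx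
  obtain ⟨hp, hl⟩ := hw
  cases w with
  | nil => simp at hl
  | cons h₁ p =>
    cases p with
    | nil => simp at hl
    | cons h₂ q =>
      cases q with
      | cons h₃ r =>
        simp only [Walk.length_cons] at hl
        omega
      | nil =>
        rename_i m
        have hne : u ≠ v := by
          simp [Walk.isPath_def] at hp
          tauto
        simp [Walk.support_cons] at hx
        rcases hx with rfl | rfl | rfl
        · exact hu
        · exact h x u v hu hv hne h₁.symm h₂
        · exact hv

lemma subset_chull (Cvx : Set V → Prop) (P : Set V) : P ⊆ chull Cvx P :=
  fun _ hx => Set.mem_sInter.2 fun _ hT => hT.1 hx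

lemma chull_subset (Cvx : Set V → Prop) {P T : Set V} (hPT : P ⊆ T) (hT : Cvx T) :
    chull Cvx P ⊆ T :=
  fun _ hx => Set.mem_sInter.1 hx T ⟨hPT, hT⟩

lemma cvx_chull (P : Set V) : P3Cvx G (chull (P3Cvx G) P) := by
  intro u v hu hv w hw x hx
  exact Set.mem_sInter.2 fun T hT =>
    hT.2 (Set.mem_sInter.1 hu T hT) (Set.mem_sInter.1 hv T hT) w hw x hx

lemma cvx_empty : P3Cvx G (∅ : Set V) :=
  cvx_of fun _ u _ hu _ _ _ _ => absurd hu (Set.notMem_empty u)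

lemma hull_struct (P : Set V) {x : V} (hx : x ∈ chull (P3Cvx G) P) :
    x ∈ P ∨ ∃ u v, u ∈ chull (P3Cvx G) P ∧ v ∈ chull (P3Cvx G) P ∧ u ≠ v ∧
      G.Adj x u ∧ G.Adj x v := by
  set H := chull (P3Cvx G) P with hH
  set A := {y | y ∈ H ∧ (y ∈ P ∨ ∃ u v, u ∈ H ∧ v ∈ H ∧ u ≠ v ∧
      G.Adj y u ∧ G.Adj y v)} with hA
  have hAcvx : P3Cvx G A := by
    apply cvx_of
    intro y u v hu hv huv hyu hyv
    rw [hA] at hu hv ⊢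
    simp only [Set.mem_setOf_eq] at hu hv ⊢
    exact ⟨mem_of_two_nbrs (cvx_chull P) hu.1 hv.1 huv hyu hyv,
      Or.inr ⟨u, v, hu.1, hv.1, huv, hyu, hyv⟩⟩
  have hPA : P ⊆ A := by
    intro p hp
    rw [hA]
    exact Set.mem_setOf_eq ▸ ⟨subset_chull _ _ hp, Or.inl hp⟩
  have hsub : H ⊆ A := chull_subset _ hPA hAcvx
  have := hsub hx
  rw [hA] at this
  exact this.2

lemma extreme_no_two {S : Set V} {x u v : V} (hx : x ∈ extremeSet (P3Cvx G) S)
    (hu : u ∈ S) (hv : v ∈ S) (huv : u ≠ v) (hxu : G.Adj x u) (hxv : G.Adj x v) : False := by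
  have hmem : x ∈ S \ {x} :=
    mem_of_two_nbrs hx.2 ⟨hu, by simp [hxu.ne']⟩ ⟨hv, by simp [hxv.ne']⟩ huv hxu hxv
  exact hmem.2 rfl

lemma no_extreme_contra (hCG : IsConvexGeometry (P3Cvx G)) {P : Set V} (hne : P.Nonempty)
    (h2 : ∀ p ∈ P, ∃ u v, u ∈ P ∧ v ∈ P ∧ u ≠ v ∧ G.Adj p u ∧ G.Adj p v) : False := by
  set S := chull (P3Cvx G) P with hSdef
  have hE : extremeSet (P3Cvx G) S = ∅ := by
    ext x
    simp only [Set.mem_empty_iff_false, iff_false]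
    intro hx
    rcases hull_struct P hx.1 with hP | ⟨u, v, hu, hv, huv, hxu, hxv⟩
    · obtain ⟨u, v, hu, hv, huv, hxu, hxv⟩ := h2 x hP
      exact extreme_no_two hx (subset_chull _ _ hu) (subset_chull _ _ hv) huv hxu hxv
    · exact extreme_no_two hx hu hv huv hxu hxv
  have heq := hCG S (cvx_chull P)
  rw [hE] at heq
  have h0 : chull (P3Cvx G) ∅ ⊆ ∅ := chull_subset _ (subset_refl _) cvx_empty
  obtain ⟨p, hp⟩ := hne
  have hpS : p ∈ S := subset_chull _ P hp
  rw [heq] at hpS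
  exact h0 hpS

lemma inducedP4_contra (hCG : IsConvexGeometry (P3Cvx G)) {a b c d : V}
    (hab : G.Adj a b) (hbc : G.Adj b c) (hcd : G.Adj c d)
    (hac : ¬G.Adj a c) (hbd : ¬G.Adj b d) (had : ¬G.Adj a d)
    (hac' : a ≠ c) (hbd' : b ≠ d) (had' : a ≠ d) : False := by
  set S := chull (P3Cvx G) {a, b, c, d} with hSdef
  have hSc : P3Cvx G S := cvx_chull _
  have haS : a ∈ S := subset_chull _ _ (by simp)
  have hbS : b ∈ S := subset_chull _ _ (by simp)
  have hcS : c ∈ S := subset_chull _ _ (by simp)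
  have hdS : d ∈ S := subset_chull _ _ (by simp)
  set E := extremeSet (P3Cvx G) S with hEdef
  have hEsub : ∀ x ∈ E, x = a ∨ x = d := by
    intro x hx
    rcases hull_struct _ hx.1 with hP | ⟨u, v, hu, hv, huv, hxu, hxv⟩
    · have hP' : x = a ∨ x = b ∨ x = c ∨ x = d := by simpa using hP
      rcases hP' with rfl | rfl | rfl | rfl
      · exact Or.inl rfl
      · exact (extreme_no_two hx haS hcS hac' hab.symm hbc).elim
      · exact (extreme_no_two hx hbS hdS hbd' hbc.symm hcd).elim
      · exact Or.inr rfl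
    · exact (extreme_no_two hx hu hv huv hxu hxv).elim
  have hEcvx : P3Cvx G E := by
    apply cvx_of
    intro y u v hu hv huv hyu hyv
    exfalso
    have key : ∀ p q : V, p = a ∨ p = d → q = a ∨ q = d → p ≠ q →
        G.Adj y p → G.Adj y q → (G.Adj y a ∧ G.Adj y d) := by
      rintro p q (rfl | rfl) (rfl | rfl) hpq hyp hyq
      · exact absurd rfl hpq
      · exact ⟨hyp, hyq⟩
      · exact ⟨hyq, hyp⟩
      · exact absurd rfl hpq
    obtain ⟨hya, hyd⟩ := key u v (hEsub u hu) (hEsub v hv) huv hyu hyv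
    have haE : a ∈ E := by
      rcases hEsub u hu with rfl | rfl
      · exact hu
      · rcases hEsub v hv with rfl | rfl
        · exact hv
        · exact absurd rfl huv
    have hyS : y ∈ S := mem_of_two_nbrs hSc haS hdS had' hya hyd
    have hyb : y ≠ b := fun h => hbd (h ▸ hyd)
    exact extreme_no_two haE hbS hyS (Ne.symm hyb) hab hya.symm
  have heq := hCG S hSc
  have hchE : chull (P3Cvx G) E ⊆ E := chull_subset _ (subset_refl E) hEcvx
  have hbE : b ∈ E := by
    have := hbS
    rw [heq] at this
    exact hchE this
  rcases hEsub b hbE with rfl | rfl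
  · exact hab.ne rfl
  · exact hbd' rfl

lemma walk_step {c x : V} (w : G.Walk x c) :
    x ≠ c → ¬G.Adj c x → ∃ y z, G.Adj c y ∧ G.Adj y z ∧ z ≠ c ∧ ¬G.Adj c z := by
  induction w with
  | nil => exact fun h _ => absurd rfl h
  | @cons p y c h w' ih =>
    intro hxc hnadj
    by_cases hyc : y = c
    · subst hyc; exact absurd h.symm hnadj
    · by_cases hcy : G.Adj c y
      · exact ⟨y, p, hcy, h.symm, hxc, hnadj⟩
      · exact ih hyc hcy

lemma center_adj (htri : ¬∃ x y z : V, G.Adj x y ∧ G.Adj y z ∧ G.Adj x z)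
    (hpath : ¬∃ a b c d : V, G.Adj a b ∧ G.Adj b c ∧ G.Adj c d ∧ a ≠ c ∧ b ≠ d ∧ a ≠ d)
    {c p q : V} (hp : G.Adj c p) (hq : G.Adj c q) (hpq : p ≠ q) :
    ∀ x, G.Reachable c x → x ≠ c → G.Adj c x := by
  intro x hr hxc
  by_contra hnadj
  obtain ⟨w⟩ := hr
  obtain ⟨y, z, hcy, hyz, hzc, hcz⟩ := walk_step w.reverse hxc hnadj
  obtain ⟨w0, hw0, hw0y⟩ : ∃ w0, G.Adj c w0 ∧ w0 ≠ y := by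
    by_cases h : p = y
    · exact ⟨q, hq, fun hqy => hpq (h.trans hqy.symm)⟩
    · exact ⟨p, hp, h⟩
  exact hpath ⟨w0, c, y, z, hw0.symm, hcy, hyz, hw0y, Ne.symm hzc,
    fun h => hcz (h ▸ hw0)⟩

lemma walk_in_pair {v u : V} : ∀ {x : V} (_ : G.Walk x v),
    (∀ z, G.Adj v z → z = u) → (∀ z, G.Adj u z → z = v) → x = v ∨ x = u := by
  intro x w
  induction w with
  | nil => exact fun _ _ => Or.inl rfl
  | @cons p y c h w' ih =>
    intro hv hu
    rcases ih hv hu with rfl | rfl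
    · exact Or.inr (hv p h.symm)
    · exact Or.inl (hu p h.symm)

lemma star_forest_to_geometry (hSF : StarForest G) : IsConvexGeometry (P3Cvx G) := by
  intro S hS
  apply Set.Subset.antisymm
  · intro s hs
    obtain ⟨c, hreach, hadj, hnon⟩ := hSF s
    have hleaf : ∀ t, t ∈ S → G.Adj c t → t ∈ extremeSet (P3Cvx G) S := by
      intro t ht hct
      refine ⟨ht, cvx_of ?_⟩
      intro x u v hu hv huv hxu hxv
      have hxS : x ∈ S := mem_of_two_nbrs hS hu.1 hv.1 huv hxu hxv
      refine ⟨hxS, ?_⟩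
      intro hxt
      have hxt' : x = t := hxt
      subst hxt'
      have hnbr : ∀ z, G.Adj x z → z = c := by
        intro z hz
        by_contra hzc
        have hcz : G.Adj c z := hadj z (Reachable.trans hct.reachable hz.reachable) hzc
        exact hnon z x hcz hct hz.symm
      exact huv ((hnbr u hxu).trans (hnbr v hxv).symm)
    by_cases hsc : s = c
    · subst hsc
      by_cases h2 : ∃ u v, u ∈ S ∧ v ∈ S ∧ u ≠ v ∧ G.Adj s u ∧ G.Adj s v
      · obtain ⟨u, v, hu, hv, huv, hsu, hsv⟩ := h2
        have huE := hleaf u hu hsu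
        have hvE := hleaf v hv hsv
        refine Set.mem_sInter.2 fun T hT => ?_
        exact mem_of_two_nbrs hT.2 (hT.1 huE) (hT.1 hvE) huv hsu hsv
      · refine subset_chull _ _ ⟨hs, cvx_of ?_⟩
        intro x u v hu hv huv hxu hxv
        have hxS : x ∈ S := mem_of_two_nbrs hS hu.1 hv.1 huv hxu hxv
        refine ⟨hxS, fun hxs => h2 ?_⟩
        have hxs' : x = s := hxs
        exact ⟨u, v, hu.1, hv.1, huv, hxs' ▸ hxu, hxs' ▸ hxv⟩
    · exact subset_chull _ _ (hleaf s hs (hadj s hreach.symm hsc))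
  · exact chull_subset _ (fun x hx => hx.1) hS

end P3Aux

/-- A finite simple graph `G` is a convex geometry with respect to the
P₃ convexity if and only if every connected component of `G` is a star. -/

theorem p3_convex_geometry_iff_star_forest
    {V : Type*} [Fintype V] (G : SimpleGraph V) :
    IsConvexGeometry (PConvex G (fun _ _ w => w.IsPath ∧ w.length = 2)) ↔ StarForest G := by
  constructor
  · intro hCG
    have htri : ¬∃ x y z : V, G.Adj x y ∧ G.Adj y z ∧ G.Adj x z := by
      rintro ⟨x, y, z, hxy, hyz, hxz⟩
      refine no_extreme_contra hCG (P := {x, y, z}) ⟨x, by simp⟩ ?_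
      intro p hp
      have hp' : p = x ∨ p = y ∨ p = z := by simpa using hp
      rcases hp' with rfl | rfl | rfl
      · exact ⟨y, z, by simp, by simp, hyz.ne, hxy, hxz⟩
      · exact ⟨x, z, by simp, by simp, hxz.ne, hxy.symm, hyz⟩
      · exact ⟨x, y, by simp, by simp, hxy.ne, hxz.symm, hyz.symm⟩
    have hpath : ¬∃ a b c d : V,
        G.Adj a b ∧ G.Adj b c ∧ G.Adj c d ∧ a ≠ c ∧ b ≠ d ∧ a ≠ d := by
      rintro ⟨a, b, c, d, hab, hbc, hcd, hac', hbd', had'⟩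
      have hac : ¬G.Adj a c := fun h => htri ⟨a, b, c, hab, hbc, h⟩
      have hbd : ¬G.Adj b d := fun h => htri ⟨b, c, d, hbc, hcd, h⟩
      by_cases had : G.Adj a d
      · refine no_extreme_contra hCG (P := {a, b, c, d}) ⟨a, by simp⟩ ?_
        intro p hp
        have hp' : p = a ∨ p = b ∨ p = c ∨ p = d := by simpa using hp
        rcases hp' with rfl | rfl | rfl | rfl
        · exact ⟨b, d, by simp, by simp, hbd', hab, had⟩
        · exact ⟨a, c, by simp, by simp, hac', hab.symm, hbc⟩
        · exact ⟨b, d, by simp, by simp, hbd', hbc.symm, hcd⟩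
        · exact ⟨a, c, by simp, by simp, hac', had.symm, hcd.symm⟩
      · exact inducedP4_contra hCG hab hbc hcd hac hbd had hac' hbd' had'
    intro v
    by_cases h2 : ∃ p q : V, G.Adj v p ∧ G.Adj v q ∧ p ≠ q
    · obtain ⟨p, q, hp, hq, hpq⟩ := h2
      exact ⟨v, Reachable.refl v, center_adj htri hpath hp hq hpq,
        fun x y hx hy hxy => htri ⟨x, v, y, hx.symm, hy, hxy⟩⟩
    · by_cases h1 : ∃ u, G.Adj v u
      · obtain ⟨u, hu⟩ := h1
        have hvonly : ∀ z, G.Adj v z → z = u := by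
          intro z hz; by_contra hne; exact h2 ⟨z, u, hz, hu, hne⟩
        by_cases h3 : ∃ q, G.Adj u q ∧ q ≠ v
        · obtain ⟨q, hq, hqv⟩ := h3
          exact ⟨u, hu.reachable, center_adj htri hpath hu.symm hq (Ne.symm hqv),
            fun x y hx hy hxy => htri ⟨x, u, y, hx.symm, hy, hxy⟩⟩
        · have huonly : ∀ z, G.Adj u z → z = v := by
            intro z hz; by_contra hne; exact h3 ⟨z, hz, hne⟩
          refine ⟨v, Reachable.refl v, ?_, ?_⟩
          · intro x hr hxv
            obtain ⟨w⟩ := hr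
            rcases walk_in_pair w.reverse hvonly huonly with rfl | rfl
            · exact absurd rfl hxv
            · exact hu
          · intro x y hx hy h
            rw [hvonly x hx, hvonly y hy] at h
            exact G.loopless.irrefl u h
      · have hvonly : ∀ z, G.Adj v z → z = v := fun z hz => absurd ⟨z, hz⟩ h1
        refine ⟨v, Reachable.refl v, ?_, ?_⟩
        · intro x hr hxv
          obtain ⟨w⟩ := hr
          rcases walk_in_pair w.reverse hvonly hvonly with rfl | rfl <;>
            exact absurd rfl hxv
        · intro x y hx _
          exact (h1 ⟨x, hx⟩).elim
  · exact star_forest_to_geometry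
end

section
/- Let 𝓕 be a family of graphs, each with at least two vertices. A finite simple graph G is a convex geometry with respect to the 𝓕-free convexity if and only if G is 𝓕-free, i.e., no induced subgraph of G is isomorphic to a member of 𝓕. -/
open SimpleGraph

variable {V : Type*} {W : Type*}

section Aux

variable {V' : Type*}

lemma aux_subset_chull (Cvx : Set V' → Prop) (S : Set V') : S ⊆ chull Cvx S := by
  intro x hx
  exact Set.mem_sInter.2 fun T hT => hT.1 hx

lemma aux_chull_min {Cvx : Set V' → Prop} {S T : Set V'} (hST : S ⊆ T) (hT : Cvx T) :
    chull Cvx S ⊆ T := fun x hx => Set.mem_sInter.1 hx T ⟨hST, hT⟩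

lemma aux_hasIso_of_iso {W' : Type*} (G : SimpleGraph V') (H : SimpleGraph W')
    {U : Set V'} (e : (G.induce U) ≃g H) : HasInducedSubgraphIso G H := by
  refine ⟨⟨fun w => (e.symm w : V'), fun a b h => e.symm.toEquiv.injective (Subtype.val_injective h)⟩, ?_⟩
  intro a b
  have := e.symm.map_rel_iff (a := a) (b := b)
  exact this

lemma aux_cvx_chull {ι : Type*} {W' : ι → Type*} [∀ i, Fintype (W' i)]
    (G : SimpleGraph V') (H : ∀ i, SimpleGraph (W' i)) (S : Set V') :
    ∀ i, HFreeConvex G (H i) (chull (fun S => ∀ i, HFreeConvex G (H i) S) S) := by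
  intro i S' hS' hcard x hx
  refine Set.mem_sInter.2 fun T hT => ?_
  exact hT.2 i S' (fun y hy => Set.mem_sInter.1 (hS' hy) T hT) hcard x hx

end Aux

/-- Given a family `𝓕` of graphs each with at least two vertices, a finite
simple graph `G` is a convex geometry with respect to the `𝓕`-free convexity if and only
if `G` is `𝓕`-free. -/
theorem Ffree_convex_geometry_iff_Ffree
    {V : Type*} [Fintype V] (G : SimpleGraph V)
    {ι : Type*} (W : ι → Type*) [∀ i, Fintype (W i)] (H : ∀ i, SimpleGraph (W i))
    (hW : ∀ i, 2 ≤ Fintype.card (W i)) :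
    IsConvexGeometry (fun S => ∀ i, HFreeConvex G (H i) S) ↔
      ∀ i, ¬ HasInducedSubgraphIso G (H i) := by
  constructor
  · -- convex geometry → F-free
    intro hgeo i hiso
    obtain ⟨f, hf⟩ := hiso
    classical
    set Cvx : Set V → Prop := fun S => ∀ i, HFreeConvex G (H i) S with hCvx
    set A : Finset V := Finset.univ.map f with hA
    have hAcard : A.card = Fintype.card (W i) := by simp [hA]
    -- the induced subgraph on A is isomorphic to H i
    have hiso2 : Nonempty ((G.induce (↑A : Set V)) ≃g H i) := by
      have hbij : Function.Bijective (fun w : W i => (⟨f w, by simp [hA]⟩ : (↑A : Set V))) := by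
        constructor
        · intro a b h
          exact f.injective (by simpa using congrArg Subtype.val h)
        · rintro ⟨y, hy⟩
          simp only [hA, Finset.coe_map, Set.mem_image] at hy
          obtain ⟨w, -, rfl⟩ := hy
          exact ⟨w, rfl⟩
      exact ⟨((⟨Equiv.ofBijective _ hbij, fun {a b} => hf a b⟩ :
        H i ≃g G.induce (↑A : Set V))).symm⟩
    -- absorption: a convex set containing A minus a vertex contains that vertex
    have habs : ∀ T : Set V, Cvx T → ∀ x ∈ A, ↑(A.erase x) ⊆ T → x ∈ T := by
      intro T hT x hx hsub
      refine hT i (A.erase x) hsub ?_ x ?_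
      · rw [Finset.card_erase_of_mem hx, hAcard]
      · have hU : (↑(A.erase x) ∪ {x} : Set V) = ↑A := by
          ext y
          simp only [Set.mem_union, Finset.coe_erase, Set.mem_diff, Set.mem_singleton_iff,
            Finset.mem_coe]
          constructor
          · rintro (⟨hy, -⟩ | rfl) <;> [exact hy; exact hx]
          · intro hy
            by_cases hyx : y = x
            · exact Or.inr hyx
            · exact Or.inl ⟨hy, hyx⟩
        rw [hU]
        exact hiso2
    set S : Set V := chull Cvx ↑A with hS
    have hAS : (↑A : Set V) ⊆ S := aux_subset_chull Cvx ↑A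
    have hCvxS : Cvx S := aux_cvx_chull G H ↑A
    have hext : extremeSet Cvx S = ∅ := by
      ext y
      simp only [Set.mem_empty_iff_false, iff_false]
      rintro ⟨hyS, hyCvx⟩
      by_cases hyA : y ∈ A
      · have : y ∈ S \ {y} := by
          refine habs _ hyCvx y hyA ?_
          intro z hz
          rw [Finset.mem_coe, Finset.mem_erase] at hz
          exact ⟨hAS hz.2, hz.1⟩
        exact this.2 rfl
      · have hsub : S ⊆ S \ {y} := by
          refine aux_chull_min ?_ hyCvx
          intro z hz
          exact ⟨hAS hz, fun h => hyA (h ▸ hz)⟩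
        exact (hsub hyS).2 rfl
    have hCvxEmpty : Cvx (∅ : Set V) := by
      intro j S' hS' hcard x _
      exfalso
      have : S' = ∅ := by simpa using hS'
      rw [this] at hcard
      have := hW j
      simp at hcard
      omega
    have := hgeo S hCvxS
    rw [hext] at this
    have hempty : S = ∅ := by
      refine this.trans (Set.eq_empty_iff_forall_notMem.2 fun x hx => ?_)
      exact (aux_chull_min (Set.empty_subset _) hCvxEmpty) hx
    have : Nonempty (W i) := Fintype.card_pos_iff.1 (by have := hW i; omega)
    obtain ⟨w⟩ := this
    have : f w ∈ S := hAS (by simp [hA])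
    rw [hempty] at this
    exact this
  · -- F-free → convex geometry
    intro hfree
    have hall : ∀ S : Set V, ∀ i, HFreeConvex G (H i) S := by
      intro S i S' hS' hcard x hx
      obtain ⟨e⟩ := hx
      exact absurd (aux_hasIso_of_iso G (H i) e) (hfree i)
    intro S hS
    have hext : extremeSet (fun S => ∀ i, HFreeConvex G (H i) S) S = S := by
      ext x
      exact ⟨fun h => h.1, fun h => ⟨h, hall _⟩⟩
    rw [hext]
    exact (Set.Subset.antisymm (aux_subset_chull _ S)
      (aux_chull_min (Cvx := fun S => ∀ i, HFreeConvex G (H i) S) (Set.Subset.refl S) (hall S)))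
end

section
/- Let 𝓕 be the family of all odd cycles. A finite simple graph G is a convex geometry with respect to the 𝓕-free convexity if and only if G is bipartite. -/
open SimpleGraph

variable {V : Type*} {W : Type*}

section AuxOddCycle

variable {V : Type*} {G : SimpleGraph V}

/-- From any odd closed sequence of adjacent vertices, extract an induced odd cycle. -/
theorem exists_induced_odd_cycle_aux :
    ∀ (n : ℕ), 3 ≤ n → Odd n →
    ∀ c : ℕ → V, c n = c 0 → (∀ i < n, G.Adj (c i) (c (i + 1))) →
    ∃ (m : ℕ) (f : Fin (2 * m + 3) → V), Function.Injective f ∧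
      ∀ i j : Fin (2 * m + 3), G.Adj (f i) (f j) ↔ (j = i + 1 ∨ i = j + 1) := by
  intro n
  induction n using Nat.strong_induction_on with
  | _ n IH =>
  intro hn3 hodd c hc he
  have key : ∀ (ℓ : ℕ) (c' : ℕ → V), ℓ < n → Odd ℓ → c' ℓ = c' 0 →
      (∀ t < ℓ, G.Adj (c' t) (c' (t + 1))) →
      ∃ (m : ℕ) (f : Fin (2 * m + 3) → V), Function.Injective f ∧
        ∀ i j : Fin (2 * m + 3), G.Adj (f i) (f j) ↔ (j = i + 1 ∨ i = j + 1) := by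
    intro ℓ c' hlt hO h0 hE
    have hℓ1 : ℓ ≠ 1 := by
      rintro rfl
      have := hE 0 one_pos
      rw [h0] at this
      exact G.loopless.irrefl _ this
    obtain ⟨k, hk⟩ := hO
    exact IH ℓ hlt (by omega) ⟨k, hk⟩ c' h0 hE
  have outer : ∀ i j : ℕ, i ≤ j → j ≤ n →
      ∃ o : ℕ → V, o 0 = c j ∧ o (n - j + i) = c i ∧
        ∀ t < n - j + i, G.Adj (o t) (o (t + 1)) := by
    intro i j hij hjn
    refine ⟨fun t => if j + t ≤ n then c (j + t) else c (j + t - n),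
      by simp only [Nat.add_zero, if_pos hjn], ?_, ?_⟩
    · by_cases h : j + (n - j + i) ≤ n
      · have hi0 : i = 0 := by omega
        simp only [if_pos h]
        rw [show j + (n - j + i) = n by omega, hc, hi0]
      · simp only [if_neg h]
        rw [show j + (n - j + i) - n = i by omega]
    · intro t ht
      by_cases h1 : j + (t + 1) ≤ n
      · have h0 : j + t ≤ n := by omega
        simp only [if_pos h1, if_pos h0]
        rw [show j + (t + 1) = (j + t) + 1 by omega]
        exact he (j + t) (by omega)
      · by_cases h0 : j + t ≤ n
        · have hjt : j + t = n := by omega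
          simp only [if_pos h0, if_neg h1]
          rw [hjt, hc, show j + (t + 1) - n = 1 by omega]
          exact he 0 (by omega)
        · simp only [if_neg h0, if_neg h1]
          rw [show j + (t + 1) - n = (j + t - n) + 1 by omega]
          exact he (j + t - n) (by omega)
  by_cases hco : ∃ i j, i < j ∧ j ≤ n ∧ j - i < n ∧ c i = c j
  · obtain ⟨i, j, hij, hjn, hdn, hcij⟩ := hco
    have hd1 : j - i ≠ 1 := by
      intro h1
      have := he i (by omega)
      rw [show i + 1 = j by omega, ← hcij] at this
      exact G.loopless.irrefl _ this
    by_cases hdo : Odd (j - i)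
    · refine key (j - i) (fun t => c (i + t)) (by omega) hdo ?_ ?_
      · beta_reduce
        rw [show i + (j - i) = j by omega, ← hcij, Nat.add_zero]
      · intro t ht
        beta_reduce
        rw [show i + (t + 1) = (i + t) + 1 by omega]
        exact he (i + t) (by omega)
    · obtain ⟨o, ho0, hoe, hoa⟩ := outer i j (by omega) hjn
      have hnd : n - j + i = n - (j - i) := by omega
      rw [hnd] at hoe hoa
      have hlt : n - (j - i) < n := by clear * - hij hjn hn3; omega
      refine key (n - (j - i)) o hlt ?_ (by rw [hoe, ho0, hcij]) hoa
      exact Nat.Odd.sub_even (by omega) hodd (Nat.not_odd_iff_even.mp hdo)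
  · by_cases hch : ∃ i j, i + 1 < j ∧ j ≤ n ∧ j - i ≤ n - 2 ∧ G.Adj (c i) (c j)
    · obtain ⟨i, j, hij, hjn, hdn, hadj⟩ := hch
      have hd2 : 2 ≤ j - i := by omega
      by_cases hdo : Odd (j - i + 1)
      · refine key (j - i + 1) (fun t => if t ≤ j - i then c (i + t) else c i)
          (by omega) hdo ?_ ?_
        · simp only [if_neg (by omega : ¬ j - i + 1 ≤ j - i),
            if_pos (by omega : 0 ≤ j - i), Nat.add_zero]
        · intro t ht
          by_cases h1 : t + 1 ≤ j - i
          · simp only [if_pos h1, if_pos (by omega : t ≤ j - i)]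
            rw [show i + (t + 1) = (i + t) + 1 by omega]
            exact he (i + t) (by omega)
          · have htd : t = j - i := by omega
            beta_reduce
            rw [if_pos (by omega : t ≤ j - i), if_neg (by omega : ¬ t + 1 ≤ j - i),
              show i + t = j by omega]
            exact hadj.symm
      · obtain ⟨o, ho0, hoe, hoa⟩ := outer i j (by omega) hjn
        have hnd : n - j + i = n - (j - i) := by omega
        rw [hnd] at hoe hoa
        have hOdd : Odd (n - (j - i) + 1) := by
          have h1 : Odd (j - i) := by
            rcases Nat.even_or_odd (j - i) with h | h
            · exact absurd (h.add_one) hdo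
            · exact h
          have h2 : Even (n - (j - i)) := Nat.Odd.sub_odd hodd h1
          rw [Nat.even_iff] at h2
          rw [Nat.odd_iff]
          omega
        have hlt : n - (j - i) + 1 < n := by clear * - hij hjn hdn hn3; omega
        refine key (n - (j - i) + 1) (fun t => if t ≤ n - (j - i) then o t else c j)
          hlt hOdd ?_ ?_
        · simp only [if_neg (by omega : ¬ n - (j - i) + 1 ≤ n - (j - i)),
            if_pos (by omega : 0 ≤ n - (j - i)), ho0]
        · intro t ht
          by_cases h1 : t + 1 ≤ n - (j - i)
          · simp only [if_pos h1, if_pos (by omega : t ≤ n - (j - i))]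
            exact hoa t (by omega)
          · have htd : t = n - (j - i) := by omega
            beta_reduce
            rw [if_pos (by omega : t ≤ n - (j - i)),
              if_neg (by omega : ¬ t + 1 ≤ n - (j - i)), htd, hoe]
            exact hadj
    · -- no coincidence, no chord : c restricted to Fin n is an induced cycle
      obtain ⟨k, hk⟩ := hodd
      obtain ⟨m, rfl⟩ : ∃ m, n = 2 * m + 3 := ⟨k - 1, by omega⟩
      push_neg at hco hch
      have hvadd : ∀ a : Fin (2 * m + 3), ((a + 1 : Fin (2 * m + 3)) : ℕ)
          = ((a : ℕ) + 1) % (2 * m + 3) := by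
        intro a
        rw [Fin.val_add, Fin.val_one', Nat.mod_eq_of_lt (show (1:ℕ) < 2 * m + 3 by omega)]
      refine ⟨m, fun i : Fin (2 * m + 3) => c i, ?_, ?_⟩
      · intro a b hab
        by_contra hne
        rcases Nat.lt_trichotomy (a : ℕ) (b : ℕ) with h | h | h
        · exact hco a b h (by omega) (by omega) hab
        · exact hne (Fin.ext h)
        · exact hco b a h (by omega) (by omega) hab.symm
      · intro i j
        have hIN : (i : ℕ) < 2 * m + 3 := i.isLt
        have hJN : (j : ℕ) < 2 * m + 3 := j.isLt
        constructor
        · intro hadj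
          have main : ∀ a b : Fin (2 * m + 3), (a : ℕ) < (b : ℕ) → G.Adj (c a) (c b) →
              (b = a + 1 ∨ a = b + 1) := by
            intro a b hab had
            have haN : (a : ℕ) < 2 * m + 3 := a.isLt
            have hbN : (b : ℕ) < 2 * m + 3 := b.isLt
            by_cases h1 : (b : ℕ) = (a : ℕ) + 1
            · left
              apply Fin.ext
              rw [hvadd, Nat.mod_eq_of_lt (by omega : (a : ℕ) + 1 < 2 * m + 3)]
              omega
            · have h2 : (a : ℕ) + 1 < (b : ℕ) := by omega
              have hwrap : (a : ℕ) = 0 ∧ (b : ℕ) = 2 * m + 2 := by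
                by_contra hcon
                exact hch a b h2 (by omega) (by omega) had
              right
              apply Fin.ext
              rw [hvadd, show (b : ℕ) + 1 = 2 * m + 3 by omega, Nat.mod_self]
              omega
          rcases Nat.lt_trichotomy (i : ℕ) (j : ℕ) with h | h | h
          · exact main i j h hadj
          · exact absurd (show G.Adj (c i) (c i) from by
              rwa [show j = i from (Fin.ext h).symm] at hadj) (G.loopless.irrefl _)
          · exact (main j i h hadj.symm).symm
        · have mpr_main : ∀ a b : Fin (2 * m + 3), b = a + 1 → G.Adj (c (a : ℕ)) (c (b : ℕ)) := by
            intro a b hba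
            have haN : (a : ℕ) < 2 * m + 3 := a.isLt
            have hv : (b : ℕ) = ((a : ℕ) + 1) % (2 * m + 3) := by rw [hba, hvadd]
            by_cases hiN : (a : ℕ) + 1 < 2 * m + 3
            · rw [Nat.mod_eq_of_lt hiN] at hv
              have h' := he (a : ℕ) (by omega)
              rw [show (a : ℕ) + 1 = (b : ℕ) by omega] at h'
              exact h'
            · rw [show (a : ℕ) + 1 = 2 * m + 3 by omega, Nat.mod_self] at hv
              have h' := he (a : ℕ) (by omega)
              rw [show (a : ℕ) + 1 = 2 * m + 3 by omega, hc,
                show (0 : ℕ) = (b : ℕ) by omega] at h'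
              exact h'
          rintro (h | h)
          · exact mpr_main i j h
          · exact (mpr_main j i h).symm


theorem fin_succ_iff_sub_val {m : ℕ} (a b : Fin (2 * m + 3)) :
    b = a + 1 ↔ (b - a).val = 1 := by
  haveI : NeZero (2 * m + 3) := ⟨by omega⟩
  have h1 : ((1 : Fin (2 * m + 3)) : ℕ) = 1 := by
    rw [Fin.val_one']
    exact Nat.mod_eq_of_lt (by omega)
  constructor
  · rintro rfl
    rw [add_sub_cancel_left, h1]
  · intro h
    have hba : b - a = 1 := Fin.ext (by rw [h1]; exact h)
    rw [sub_eq_iff_eq_add] at hba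
    rw [hba]; exact add_comm 1 a

theorem cycle_iso {m : ℕ} (f : Fin (2 * m + 3) → V) (hf : Function.Injective f)
    (hadj : ∀ i j, G.Adj (f i) (f j) ↔ (j = i + 1 ∨ i = j + 1)) :
    Nonempty (G.induce (Set.range f) ≃g cycleGraph (2 * m + 3)) := by
  refine ⟨RelIso.symm ⟨Equiv.ofInjective f hf, ?_⟩⟩
  intro i j
  show G.Adj (f i) (f j) ↔ (cycleGraph (2 * m + 3)).Adj i j
  rw [hadj, cycleGraph_adj']
  rw [← fin_succ_iff_sub_val j i, ← fin_succ_iff_sub_val i j]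
  exact or_comm

open Fin.NatCast in
theorem no_odd_iso (A : Set V) (hA : ∀ u v, G.Adj u v → (u ∈ A ↔ v ∉ A)) (m : ℕ) (s : Set V) :
    ¬ Nonempty (G.induce s ≃g cycleGraph (2 * m + 3)) := by
  rintro ⟨e⟩
  haveI : NeZero (2 * m + 3) := ⟨by omega⟩
  set g : Fin (2 * m + 3) → Prop := fun i => (↑(e.symm i) : V) ∈ A with hg
  have hstep : ∀ i : Fin (2 * m + 3), (g i ↔ ¬ g (i + 1)) := by
    intro i
    apply hA
    have hc : (cycleGraph (2 * m + 3)).Adj i (i + 1) := by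
      rw [cycleGraph_adj']
      right
      rw [add_sub_cancel_left, Fin.val_one']
      exact Nat.mod_eq_of_lt (by omega)
    exact e.symm.map_rel_iff.mpr hc
  have hpar : ∀ k : ℕ, (g (k : Fin (2 * m + 3)) ↔ (Even k ↔ g 0)) := by
    intro k
    induction k with
    | zero => simp
    | succ k ih =>
      have hcast : ((k + 1 : ℕ) : Fin (2 * m + 3)) = (k : Fin (2 * m + 3)) + 1 := by
        push_cast
        ring
      have hs := hstep (k : Fin (2 * m + 3))
      rw [hcast, Nat.even_add_one]
      tauto
  have h1 := hpar (2 * m + 3)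
  rw [Fin.natCast_self] at h1
  have h2 : ¬ Even (2 * m + 3) := by
    rw [Nat.even_iff]
    omega
  tauto

/-- `x` lies on an induced odd cycle of `G` (phrased via finsets/isos). -/
def OnOddCycle (G : SimpleGraph V) (x : V) : Prop :=
  ∃ (m : ℕ) (S' : Finset V), x ∉ S' ∧ S'.card = 2 * m + 2 ∧
    Nonempty ((G.induce (↑S' ∪ {x} : Set V)) ≃g cycleGraph (2 * m + 3))

theorem onOddCycle_convex (G : SimpleGraph V) (m : ℕ) :
    HFreeConvex G (cycleGraph (2 * m + 3)) {x | ¬ OnOddCycle G x} := by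
  classical
  intro S' hsub hcard x hne
  obtain ⟨e⟩ := hne
  rw [Fintype.card_fin] at hcard
  exfalso
  have hx : x ∉ S' := by
    intro hx
    have hset : ((↑S' : Set V) ∪ {x}) = (↑S' : Set V) := by
      apply Set.union_eq_self_of_subset_right
      simp [hx]
    rw [hset] at e
    have hcardeq : (↑S' : Set V).ncard = 2 * m + 3 := by
      calc (↑S' : Set V).ncard = Nat.card ↥(↑S' : Set V) := (Nat.card_coe_set_eq _).symm
        _ = Nat.card (Fin (2 * m + 3)) := Nat.card_congr e.toEquiv
        _ = 2 * m + 3 := Nat.card_eq_fintype_card.trans (Fintype.card_fin _)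
    rw [Set.ncard_coe_finset] at hcardeq
    omega
  obtain ⟨y, hy⟩ : S'.Nonempty := Finset.card_pos.mp (by omega)
  apply hsub hy
  refine ⟨m, insert x (S'.erase y), ?_, ?_, ?_⟩
  · intro h
    rcases Finset.mem_insert.mp h with h | h
    · exact hx (h ▸ hy)
    · exact (Finset.mem_erase.mp h).1 rfl
  · rw [Finset.card_insert_of_notMem (fun h => hx (Finset.mem_of_mem_erase h)),
      Finset.card_erase_of_mem hy]
    omega
  · have hset : ((↑(insert x (S'.erase y)) : Set V) ∪ {y}) = (↑S' : Set V) ∪ {x} := by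
      ext z
      simp only [Finset.coe_insert, Finset.coe_erase, Set.mem_union, Set.mem_insert_iff,
        Set.mem_diff, Set.mem_singleton_iff, Finset.mem_coe]
      constructor
      · rintro ((rfl | ⟨hz, -⟩) | rfl)
        · exact Or.inr rfl
        · exact Or.inl hz
        · exact Or.inl hy
      · rintro (hz | rfl)
        · by_cases hzy : z = y
          · exact Or.inr hzy
          · exact Or.inl (Or.inr ⟨hz, hzy⟩)
        · exact Or.inl (Or.inl rfl)
    rw [hset]
    exact ⟨e⟩

end AuxOddCycle

/-- For the family `𝓕` of all odd cycles, a finite simple graph `G` is a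
convex geometry with respect to the `𝓕`-free convexity if and only if `G` is bipartite. -/

theorem odd_cycle_free_convex_geometry_iff_bipartite
    {V : Type*} [Fintype V] (G : SimpleGraph V) :
    IsConvexGeometry
        (fun S => ∀ m : ℕ, HFreeConvex G (SimpleGraph.cycleGraph (2 * m + 3)) S) ↔
      ∃ A : Set V, ∀ u v : V, G.Adj u v → (u ∈ A ↔ v ∉ A) := by
  classical
  constructor
  · intro hCG
    by_contra hnb
    push_neg at hnb
    set A : Set V := {v | Odd (G.dist (G.connectedComponentMk v).out v)} with hA
    obtain ⟨u, v, huv, hpar⟩ := hnb A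
    have hsame : (u ∈ A ↔ v ∈ A) := by tauto
    have hcm : G.connectedComponentMk u = G.connectedComponentMk v :=
      ConnectedComponent.sound huv.reachable
    set r := (G.connectedComponentMk u).out with hr
    have hru : G.Reachable r u := ConnectedComponent.exact (G.connectedComponentMk u).out_eq
    have hrv : G.Reachable r v := ConnectedComponent.exact
      ((G.connectedComponentMk u).out_eq.trans hcm)
    obtain ⟨p, hp⟩ := hru.exists_walk_length_eq_dist
    obtain ⟨q, hq⟩ := hrv.exists_walk_length_eq_dist
    set w : G.Walk r r := p.append (SimpleGraph.Walk.cons huv q.reverse) with hw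
    have hlen : w.length = G.dist r u + (1 + G.dist r v) := by
      simp [hw, SimpleGraph.Walk.length_append, SimpleGraph.Walk.length_cons,
        SimpleGraph.Walk.length_reverse, hp, hq]
      omega
    have hAu : (u ∈ A) = Odd (G.dist r u) := rfl
    have hAv : (v ∈ A) = Odd (G.dist r v) := by
      show Odd (G.dist (G.connectedComponentMk v).out v) = _
      rw [← hcm]
    rw [hAu, hAv, Nat.odd_iff, Nat.odd_iff] at hsame
    have hodd : Odd w.length := by
      rw [hlen, Nat.odd_iff]
      omega
    have h3 : 3 ≤ w.length := by
      by_contra hlt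
      push_neg at hlt
      rw [Nat.odd_iff] at hodd
      have hdu : G.dist r u = 0 := by omega
      have hdv : G.dist r v = 0 := by omega
      exact G.ne_of_adj huv
        ((hru.dist_eq_zero_iff.mp hdu).symm.trans (hrv.dist_eq_zero_iff.mp hdv))
    obtain ⟨m, f, hf, hadj⟩ := exists_induced_odd_cycle_aux w.length h3 hodd
      (fun i => w.getVert i)
      (by simp [SimpleGraph.Walk.getVert_length, SimpleGraph.Walk.getVert_zero])
      (fun i hi => w.adj_getVert_succ hi)
    obtain ⟨e⟩ := cycle_iso f hf hadj
    have hQ : OnOddCycle G (f 0) := by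
      have hmem : f 0 ∈ Finset.univ.image f := Finset.mem_image_of_mem f (Finset.mem_univ 0)
      refine ⟨m, (Finset.univ.image f).erase (f 0), Finset.notMem_erase _ _, ?_, ?_⟩
      · rw [Finset.card_erase_of_mem hmem, Finset.card_image_of_injective _ hf,
          Finset.card_univ, Fintype.card_fin]
        omega
      · have hset : ((↑((Finset.univ.image f).erase (f 0)) : Set V) ∪ {f 0})
            = Set.range f := by
          ext z
          simp only [Finset.coe_erase, Finset.coe_image, Finset.coe_univ, Set.image_univ,
            Set.mem_union, Set.mem_diff, Set.mem_singleton_iff, Set.mem_range]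
          constructor
          · rintro (⟨⟨i, rfl⟩, -⟩ | rfl)
            · exact ⟨i, rfl⟩
            · exact ⟨0, rfl⟩
          · rintro ⟨i, rfl⟩
            by_cases hz : f i = f 0
            · exact Or.inr hz
            · exact Or.inl ⟨⟨i, rfl⟩, hz⟩
        rw [hset]
        exact ⟨e⟩
    have hVconv : ∀ m, HFreeConvex G (cycleGraph (2 * m + 3)) Set.univ :=
      fun m S' _ _ x _ => Set.mem_univ x
    have huniv := hCG Set.univ hVconv
    have hext : extremeSet (fun S => ∀ m : ℕ, HFreeConvex G (cycleGraph (2 * m + 3)) S)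
        Set.univ ⊆ {x | ¬ OnOddCycle G x} := by
      rintro x ⟨-, hconv⟩ hQx
      obtain ⟨m', S', hxS, hcard, hne⟩ := hQx
      have hmem := hconv m' S'
        (fun z hz => ⟨trivial, fun h => hxS (h ▸ hz)⟩)
        (by rw [hcard, Fintype.card_fin]; omega) x hne
      exact hmem.2 rfl
    have hchull : chull (fun S => ∀ m : ℕ, HFreeConvex G (cycleGraph (2 * m + 3)) S)
        (extremeSet (fun S => ∀ m : ℕ, HFreeConvex G (cycleGraph (2 * m + 3)) S) Set.univ)
        ⊆ {x | ¬ OnOddCycle G x} :=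
      Set.sInter_subset_of_mem ⟨hext, onOddCycle_convex G⟩
    have hf0 : f 0 ∈ chull (fun S => ∀ m : ℕ, HFreeConvex G (cycleGraph (2 * m + 3)) S)
        (extremeSet (fun S => ∀ m : ℕ, HFreeConvex G (cycleGraph (2 * m + 3)) S) Set.univ) := by
      rw [← huniv]
      exact Set.mem_univ _
    exact hchull hf0 hQ
  · rintro ⟨A, hA⟩ S hS
    have hall : ∀ T : Set V, (∀ m : ℕ, HFreeConvex G (cycleGraph (2 * m + 3)) T) := by
      intro T m S' _ _ x hne
      exact absurd hne (no_odd_iso A hA m _)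
    have hext : extremeSet (fun S => ∀ m : ℕ, HFreeConvex G (cycleGraph (2 * m + 3)) S) S
        = S := by
      ext x
      simp only [extremeSet, Set.mem_setOf_eq]
      exact and_iff_left (hall _)
    rw [hext]
    apply subset_antisymm
    · exact Set.subset_sInter (fun T hT => hT.1)
    · exact Set.sInter_subset_of_mem ⟨subset_rfl, hall S⟩
end

section
/- A finite simple graph G is a convex geometry with respect to the P₄⁺ convexity if and only if G is a cograph. -/
open SimpleGraph

variable {V : Type*} {W : Type*}

/-- A finite simple graph `G` is a convex geometry with respect to the
P₄⁺ convexity if and only if `G` is a cograph. -/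
theorem p4plus_convex_geometry_iff_cograph
    {V : Type*} [Fintype V] (G : SimpleGraph V) :
    IsConvexGeometry
        (fun S => ∀ a b c d : V,
          InducedP4 G a b c d → a ∈ S → b ∈ S → d ∈ S → c ∈ S) ↔
      ∀ a b c d : V, ¬ InducedP4 G a b c d := by
  set Cvx : Set V → Prop := fun S => ∀ a b c d : V,
      InducedP4 G a b c d → a ∈ S → b ∈ S → d ∈ S → c ∈ S with hC
  have hsymm : ∀ {p q r s : V}, InducedP4 G p q r s → InducedP4 G s r q p := by
    rintro p q r s ⟨h1, h2, h3, h4, h5, h6⟩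
    exact ⟨h3.symm, h2.symm, h1.symm, fun h => h6 h.symm, fun h => h5 h.symm,
      fun h => h4 h.symm⟩
  constructor
  · intro hcg
    by_contra h
    push_neg at h
    obtain ⟨a, b, c, d, hp⟩ := h
    set M : Set V := {x | ∃ p q s, InducedP4 G p q x s} with hM
    have hcomp : Cvx (Set.univ \ M) := by
      intro p q r s hp4 _ hqm _
      exact absurd ⟨s, r, p, hsymm hp4⟩ hqm.2
    have huniv : Cvx (Set.univ : Set V) := fun _ _ _ _ _ _ _ _ => trivial
    have hext : extremeSet Cvx Set.univ ⊆ Set.univ \ M := by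
      rintro x ⟨-, hx⟩
      refine ⟨trivial, ?_⟩
      rintro ⟨p, q, s, hp4⟩
      obtain ⟨h1, h2, h3, h4, h5, h6⟩ := hp4
      have hpx : p ≠ x := by rintro rfl; exact h5 h3
      have hqx : q ≠ x := h2.ne
      have hsx : s ≠ x := fun e => h3.ne e.symm
      have := hx p q x s ⟨h1, h2, h3, h4, h5, h6⟩ ⟨trivial, hpx⟩ ⟨trivial, hqx⟩
        ⟨trivial, hsx⟩
      exact this.2 rfl
    have heq := hcg Set.univ huniv
    have hbM : b ∈ M := ⟨d, c, a, hsymm hp⟩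
    have hb : b ∈ chull Cvx (extremeSet Cvx Set.univ) := by
      rw [← heq]; trivial
    have : b ∈ Set.univ \ M := hb (Set.univ \ M) ⟨hext, hcomp⟩
    exact this.2 hbM
  · intro h S _
    have hext : extremeSet Cvx S = S := by
      ext x
      constructor
      · rintro ⟨hx, -⟩; exact hx
      · intro hx
        exact ⟨hx, fun a b c d hp _ _ _ => absurd hp (h a b c d)⟩
    rw [hext]
    apply Set.Subset.antisymm
    · intro x hx T hT
      exact hT.1 hx
    · intro x hx
      exact hx S ⟨Set.Subset.refl S, fun a b c d hp _ _ _ => absurd hp (h a b c d)⟩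
end
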